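/- Let t > 0, −π/3 < θ < π/3, (θ, t) ≠ (0, 1), and let p, q, r ≥ 0 be real numbers. Set α = (p+q+r)|t − e^{iθ}|²/(3(2cosθ − 1)). If D[α,p,q,r,t,θ] = 0, then p = q = r. -/

import Mathlib

open Complex

noncomputable def Dpoly (α p q r t θ : ℝ) : ℝ :=
  (p * q * r) * t ^ 6 + α * (p * q + q * r + r * p) * t ^ 4
    - 2 * (α * (p * q + q * r + r * p) + Real.cos (3 * θ) * (p * q * r)) * t ^ 3
    + α * (1 - 2 * Real.cos (3 * θ)) * (p * q + q * r + r * p) * t ^ 2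
    - 2 * α * (α * (p + q + r) + α * Real.cos (3 * θ) * (p + q + r)
        + (p * q + q * r + r * p)) * t
    + (p * q * r) + α * (p * q + q * r + r * p) - 2 * α ^ 3 * (1 + Real.cos (3 * θ))

/-!
Write `c = cos θ`, so that `cos 3θ = 4c³ - 3c` and `|t - e^{iθ}|² = t² - 2tc + 1`. After clearing the
denominator of `α`, `-27 (2c - 1)³ D` becomes
`A · (p³ + q³ + r³ - 3pqr) + B · ((p + q + r)(pq + qr + rp) - 9pqr)` with `A > 0` and `B ≥ 0` for
`1/2 < c ≤ 1`, `(θ, t) ≠ (0, 1)`. Both brackets are nonnegative by AM-GM, so `D = 0` forces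
`p³ + q³ + r³ = 3pqr`, whose only nonnegative solutions have `p = q = r`.
-/

theorem three_mul_mul_le_add_pow_three {p q r : ℝ} (hp : 0 ≤ p) (hq : 0 ≤ q) (hr : 0 ≤ r) :
    3 * p * q * r ≤ p ^ 3 + q ^ 3 + r ^ 3 := by
  nlinarith [mul_nonneg (add_nonneg (add_nonneg hp hq) hr)
    (add_nonneg (add_nonneg (sq_nonneg (p - q)) (sq_nonneg (q - r))) (sq_nonneg (r - p)))]

theorem eq_and_eq_of_add_pow_three_eq {p q r : ℝ} (hp : 0 ≤ p) (hq : 0 ≤ q) (hr : 0 ≤ r)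
    (h : p ^ 3 + q ^ 3 + r ^ 3 = 3 * p * q * r) : p = q ∧ q = r := by
  have hfactor : (p + q + r) * ((p - q) ^ 2 + (q - r) ^ 2 + (r - p) ^ 2) = 0 := by
    linear_combination 2 * h
  rcases mul_eq_zero.mp hfactor with hsum | hsq
  · constructor <;> linarith
  · constructor <;> nlinarith [sq_nonneg (p - q), sq_nonneg (q - r), sq_nonneg (r - p)]

theorem nine_mul_mul_le_add_mul_add {p q r : ℝ} (hp : 0 ≤ p) (hq : 0 ≤ q) (hr : 0 ≤ r) :
    9 * (p * q * r) ≤ (p + q + r) * (p * q + q * r + r * p) := by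
  nlinarith [mul_nonneg hp (sq_nonneg (q - r)), mul_nonneg hq (sq_nonneg (r - p)),
    mul_nonneg hr (sq_nonneg (p - q))]

theorem three_mul_sq_le_sq_add_mul_add_one {c : ℝ} (t : ℝ) (hc : |c| ≤ 1) :
    3 * (1 - c ^ 2) * t ^ 2 ≤ (t ^ 2 + c * t + 1) ^ 2 := by
  -- `(2 - |c|)² - 3 (1 - c²) = (2|c| - 1)²`
  have h2 : (2 - |c|) * |t| ≤ t ^ 2 + c * t + 1 := by
    nlinarith [sq_nonneg (|t| - 1), sq_abs t, abs_mul_abs_self t, neg_abs_le (c * t), abs_mul c t]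
  nlinarith [sq_nonneg ((2 * |c| - 1) * t), sq_abs c, sq_abs t, abs_nonneg t,
    mul_le_mul h2 h2 (by nlinarith [abs_nonneg t]) (by nlinarith [abs_nonneg t])]

theorem Complex.normSq_ofReal_sub_exp_ofReal_mul_I (t θ : ℝ) :
    normSq (t - exp (θ * I)) = t ^ 2 - 2 * t * Real.cos θ + 1 := by
  rw [normSq_apply, sub_re, sub_im, exp_ofReal_mul_I_re, exp_ofReal_mul_I_im, ofReal_re,
    ofReal_im]
  linear_combination Real.sin_sq_add_cos_sq θ

theorem Complex.normSq_ofReal_sub_exp_ofReal_mul_I_pos {t θ : ℝ} (hl : -Real.pi < θ)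
    (hr : θ < Real.pi) (hne : ¬(θ = 0 ∧ t = 1)) : 0 < normSq (t - exp (θ * I)) := by
  refine normSq_pos.mpr fun h => hne ?_
  have him := congrArg im h
  have hre := congrArg re h
  simp only [sub_im, sub_re, ofReal_im, ofReal_re, exp_ofReal_mul_I_im, exp_ofReal_mul_I_re,
    zero_re, zero_im] at him hre
  have hθ : θ = 0 := (Real.sin_eq_zero_iff_of_lt_of_lt hl hr).mp (by linarith)
  refine ⟨hθ, ?_⟩
  rw [hθ, Real.cos_zero] at hre
  linarith

theorem one_half_lt_cos {θ : ℝ} (hl : -(Real.pi / 3) < θ) (hr : θ < Real.pi / 3) :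
    1 / 2 < Real.cos θ := by
  have h := Real.cos_lt_cos_of_nonneg_of_le_pi (abs_nonneg θ) (by linarith [Real.pi_pos])
    (abs_lt.mpr ⟨hl, hr⟩)
  rwa [Real.cos_abs, Real.cos_pi_div_three] at h

theorem neg_mul_Dpoly_eq (p q r t θ : ℝ) (hd : 2 * Real.cos θ - 1 ≠ 0) :
    -27 * (2 * Real.cos θ - 1) ^ 3 * Dpoly ((p + q + r) * (t ^ 2 - 2 * t * Real.cos θ + 1) /
        (3 * (2 * Real.cos θ - 1))) p q r t θ
      = 2 * (Real.cos θ + 1) * (2 * Real.cos θ - 1) ^ 2 * (t ^ 2 - 2 * t * Real.cos θ + 1) ^ 2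
          * (t ^ 2 + (4 * Real.cos θ - 3) * t + 1) * (p ^ 3 + q ^ 3 + r ^ 3 - 3 * p * q * r)
        + 3 * (2 * Real.cos θ - 1) ^ 3 * (t ^ 2 - 2 * t * Real.cos θ + 1)
          * ((t ^ 2 + Real.cos θ * t + 1) ^ 2 - 3 * (1 - Real.cos θ ^ 2) * t ^ 2)
          * ((p + q + r) * (p * q + q * r + r * p) - 9 * (p * q * r)) := by
  rw [Dpoly, Real.cos_three_mul]
  field_simp
  ring

theorem Dpoly_zero_imp_eq (p q r t θ : ℝ)
    (hθl : -(Real.pi / 3) < θ) (hθr : θ < Real.pi / 3) (hne : ¬(θ = 0 ∧ t = 1))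
    (hp : 0 ≤ p) (hq : 0 ≤ q) (hr : 0 ≤ r)
    (hD : Dpoly ((p + q + r) * Complex.normSq ((t : ℂ) - exp (θ * I)) /
        (3 * (2 * Real.cos θ - 1))) p q r t θ = 0) :
    p = q ∧ q = r := by
  have hc : 1 / 2 < Real.cos θ := one_half_lt_cos hθl hθr
  have hc_abs : |Real.cos θ| ≤ 1 := Real.abs_cos_le_one θ
  have hu : 0 < t ^ 2 - 2 * t * Real.cos θ + 1 := by
    rw [← normSq_ofReal_sub_exp_ofReal_mul_I]
    exact normSq_ofReal_sub_exp_ofReal_mul_I_pos (by linarith [Real.pi_pos]) (by linarith) hne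
  have hv : 0 < t ^ 2 + (4 * Real.cos θ - 3) * t + 1 := by
    nlinarith [sq_nonneg (2 * t + 4 * Real.cos θ - 3), abs_le.mp hc_abs]
  have hd : 0 < 2 * Real.cos θ - 1 := by linarith
  have hA : 0 < 2 * (Real.cos θ + 1) * (2 * Real.cos θ - 1) ^ 2
      * (t ^ 2 - 2 * t * Real.cos θ + 1) ^ 2 * (t ^ 2 + (4 * Real.cos θ - 3) * t + 1) :=
    mul_pos (mul_pos (mul_pos (by linarith) (pow_pos hd 2)) (pow_pos hu 2)) hv
  have hsum := neg_mul_Dpoly_eq p q r t θ hd.ne'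
  rw [normSq_ofReal_sub_exp_ofReal_mul_I] at hD
  rw [hD, mul_zero] at hsum
  have hF := sub_nonneg.mpr (three_mul_mul_le_add_pow_three hp hq hr)
  have hG := sub_nonneg.mpr (nine_mul_mul_le_add_mul_add hp hq hr)
  have hH := sub_nonneg.mpr (three_mul_sq_le_sq_add_mul_add_one t hc_abs)
  have hB := mul_nonneg (mul_nonneg zero_le_three (pow_pos hd 3).le) hu.le
  obtain ⟨hAF, -⟩ := (add_eq_zero_iff_of_nonneg (mul_nonneg hA.le hF)
    (mul_nonneg (mul_nonneg hB hH) hG)).mp hsum.symm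
  exact eq_and_eq_of_add_pow_three_eq hp hq hr
    (sub_eq_zero.mp ((mul_eq_zero.mp hAF).resolve_left hA.ne'))
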